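/- Let X ∈ ℝ^{n×d} have full column rank (σmin(X) > 0) and let M ∈ ℝ^{d×d} be a real symmetric positive semi-definite matrix. Then X·M + X = X·(M + I) has full column rank and κ(X·M + X) ≤ κ(X)·(σmax(M) + 1)/(σmin(M) + 1). -/

import Mathlib

open Matrix

/-- Euclidean norm of a vector in `ℝ^m`. -/
noncomputable def enorm {m : ℕ} (x : Fin m → ℝ) : ℝ :=
  Real.sqrt (∑ i, (x i) ^ 2)

/-- Largest singular value of a matrix `A ∈ ℝ^{n×d}`:
`σmax(A) = sup {‖A v‖ : ‖v‖ = 1}` with Euclidean norms. -/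
noncomputable def sMax {n d : ℕ} (A : Matrix (Fin n) (Fin d) ℝ) : ℝ :=
  sSup {c : ℝ | ∃ v : Fin d → ℝ, _root_.enorm v = 1 ∧ c = _root_.enorm (A.mulVec v)}

/-- Smallest singular value of a matrix `A ∈ ℝ^{n×d}`:
`σmin(A) = inf {‖A v‖ : ‖v‖ = 1}` with Euclidean norms. -/
noncomputable def sMin {n d : ℕ} (A : Matrix (Fin n) (Fin d) ℝ) : ℝ :=
  sInf {c : ℝ | ∃ v : Fin d → ℝ, _root_.enorm v = 1 ∧ c = _root_.enorm (A.mulVec v)}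

/-- Condition number `κ(A) = σmax(A) / σmin(A)`. -/
noncomputable def condNum {n d : ℕ} (A : Matrix (Fin n) (Fin d) ℝ) : ℝ :=
  sMax A / sMin A

lemma enorm_nonneg {m : ℕ} (x : Fin m → ℝ) : 0 ≤ _root_.enorm x := Real.sqrt_nonneg _

lemma enorm_eq_norm {m : ℕ} (x : Fin m → ℝ) :
    _root_.enorm x = ‖(WithLp.equiv 2 (Fin m → ℝ)).symm x‖ := by
  simp only [EuclideanSpace.norm_eq, Real.norm_eq_abs, sq_abs, WithLp.equiv_symm_apply, PiLp.toLp_apply]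
  rfl

lemma enorm_sq {m : ℕ} (x : Fin m → ℝ) : _root_.enorm x ^ 2 = ∑ i, (x i) ^ 2 :=
  Real.sq_sqrt (Finset.sum_nonneg fun i _ => sq_nonneg _)

lemma enorm_add_le_fin {m : ℕ} (x y : Fin m → ℝ) : _root_.enorm (x + y) ≤ _root_.enorm x + _root_.enorm y := by
  rw [enorm_eq_norm, enorm_eq_norm, enorm_eq_norm]
  exact norm_add_le _ _

lemma enorm_smul_fin {m : ℕ} (c : ℝ) (x : Fin m → ℝ) : _root_.enorm (c • x) = |c| * _root_.enorm x := by
  rw [enorm_eq_norm, enorm_eq_norm x]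
  have : (WithLp.equiv 2 (Fin m → ℝ)).symm (c • x) = c • (WithLp.equiv 2 (Fin m → ℝ)).symm x := rfl
  rw [this, norm_smul, Real.norm_eq_abs]

/-- The set whose sup/inf define the singular values. -/
def svSet {n d : ℕ} (A : Matrix (Fin n) (Fin d) ℝ) : Set ℝ :=
  {c : ℝ | ∃ v : Fin d → ℝ, _root_.enorm v = 1 ∧ c = _root_.enorm (A.mulVec v)}

lemma sMax_eq {n d : ℕ} (A : Matrix (Fin n) (Fin d) ℝ) : sMax A = sSup (svSet A) := rfl
lemma sMin_eq {n d : ℕ} (A : Matrix (Fin n) (Fin d) ℝ) : sMin A = sInf (svSet A) := rfl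

lemma svSet_bddBelow {n d : ℕ} (A : Matrix (Fin n) (Fin d) ℝ) : BddBelow (svSet A) := by
  refine ⟨0, fun c hc => ?_⟩
  obtain ⟨v, -, rfl⟩ := hc
  exact enorm_nonneg _

lemma svSet_nonneg {n d : ℕ} (A : Matrix (Fin n) (Fin d) ℝ) {c : ℝ} (hc : c ∈ svSet A) :
    0 ≤ c := by obtain ⟨v, -, rfl⟩ := hc; exact enorm_nonneg _

lemma svSet_bddAbove {n d : ℕ} (A : Matrix (Fin n) (Fin d) ℝ) : BddAbove (svSet A) := by
  refine ⟨Real.sqrt (∑ i, ∑ j, (A i j) ^ 2), fun c hc => ?_⟩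
  obtain ⟨v, hv, rfl⟩ := hc
  have h1 : ∑ j, (v j) ^ 2 = 1 := by
    have := enorm_sq v
    rw [hv] at this
    simpa using this.symm
  have hb : _root_.enorm (A.mulVec v) ^ 2 ≤ ∑ i, ∑ j, (A i j) ^ 2 := by
    rw [enorm_sq]
    have : ∀ i, (A.mulVec v i) ^ 2 ≤ ∑ j, (A i j) ^ 2 := by
      intro i
      have := Finset.sum_mul_sq_le_sq_mul_sq Finset.univ (fun j => A i j) v
      calc (A.mulVec v i) ^ 2 = (∑ j, A i j * v j) ^ 2 := rfl
        _ ≤ (∑ j, (A i j) ^ 2) * (∑ j, (v j) ^ 2) := this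
        _ = ∑ j, (A i j) ^ 2 := by rw [h1, mul_one]
    exact Finset.sum_le_sum fun i _ => this i
  calc _root_.enorm (A.mulVec v) = Real.sqrt (_root_.enorm (A.mulVec v) ^ 2) := by
        rw [Real.sqrt_sq (enorm_nonneg _)]
    _ ≤ Real.sqrt (∑ i, ∑ j, (A i j) ^ 2) := Real.sqrt_le_sqrt hb

lemma le_sMax {n d : ℕ} (A : Matrix (Fin n) (Fin d) ℝ) {v : Fin d → ℝ} (hv : _root_.enorm v = 1) :
    _root_.enorm (A.mulVec v) ≤ sMax A :=
  le_csSup (svSet_bddAbove A) ⟨v, hv, rfl⟩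

lemma sMin_le {n d : ℕ} (A : Matrix (Fin n) (Fin d) ℝ) {v : Fin d → ℝ} (hv : _root_.enorm v = 1) :
    sMin A ≤ _root_.enorm (A.mulVec v) :=
  csInf_le (svSet_bddBelow A) ⟨v, hv, rfl⟩

lemma sMin_nonneg {n d : ℕ} (A : Matrix (Fin n) (Fin d) ℝ) : 0 ≤ sMin A := by
  by_cases h : (svSet A).Nonempty
  · exact le_csInf h fun c hc => svSet_nonneg A hc
  · rw [sMin_eq, Set.not_nonempty_iff_eq_empty.1 h, Real.sInf_empty]

lemma sMax_nonneg' {n d : ℕ} (A : Matrix (Fin n) (Fin d) ℝ) (h : (svSet A).Nonempty) :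
    0 ≤ sMax A := by
  obtain ⟨c, hc⟩ := h
  exact le_trans (svSet_nonneg A hc) (le_csSup (svSet_bddAbove A) hc)

lemma enorm_eq_zero_fin {m : ℕ} {x : Fin m → ℝ} (h : _root_.enorm x = 0) : x = 0 := by
  rw [enorm_eq_norm] at h
  have := norm_eq_zero.1 h
  exact congrArg (WithLp.equiv 2 (Fin m → ℝ)) this

lemma enorm_zero_fin {m : ℕ} : _root_.enorm (0 : Fin m → ℝ) = 0 := by simp [_root_.enorm]

lemma mulVec_homog {n d : ℕ} (A : Matrix (Fin n) (Fin d) ℝ) {w : Fin d → ℝ}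
    (h : _root_.enorm w ≠ 0) :
    ∃ u : Fin d → ℝ, _root_.enorm u = 1 ∧ _root_.enorm (A.mulVec w) = _root_.enorm w * _root_.enorm (A.mulVec u) := by
  have hpos : 0 < _root_.enorm w := lt_of_le_of_ne (enorm_nonneg w) (Ne.symm h)
  refine ⟨(_root_.enorm w)⁻¹ • w, ?_, ?_⟩
  · rw [enorm_smul_fin, abs_inv, abs_of_pos hpos, inv_mul_cancel₀ (ne_of_gt hpos)]
  · rw [Matrix.mulVec_smul, enorm_smul_fin, abs_inv, abs_of_pos hpos, ← mul_assoc,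
      mul_inv_cancel₀ (ne_of_gt hpos), one_mul]

lemma mulVec_le_sMax {n d : ℕ} (A : Matrix (Fin n) (Fin d) ℝ) (hne : (svSet A).Nonempty)
    (w : Fin d → ℝ) : _root_.enorm (A.mulVec w) ≤ sMax A * _root_.enorm w := by
  rcases eq_or_ne (_root_.enorm w) 0 with h | h
  · rw [h, mul_zero, enorm_eq_zero_fin h]
    simp only [Matrix.mulVec_zero]
    exact le_of_eq enorm_zero_fin
  · obtain ⟨u, hu1, hkey⟩ := mulVec_homog A h
    rw [hkey, mul_comm (sMax A)]
    exact mul_le_mul_of_nonneg_left (le_sMax A hu1)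
      (le_of_lt (lt_of_le_of_ne (enorm_nonneg w) (Ne.symm h)))

lemma sMin_le_mulVec {n d : ℕ} (A : Matrix (Fin n) (Fin d) ℝ)
    (w : Fin d → ℝ) : sMin A * _root_.enorm w ≤ _root_.enorm (A.mulVec w) := by
  rcases eq_or_ne (_root_.enorm w) 0 with h | h
  · rw [h, mul_zero, enorm_eq_zero_fin h]
    simp only [Matrix.mulVec_zero]
    exact le_of_eq enorm_zero_fin.symm
  · obtain ⟨u, hu1, hkey⟩ := mulVec_homog A h
    rw [hkey, mul_comm (sMin A)]
    exact mul_le_mul_of_nonneg_left (sMin_le A hu1)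
      (le_of_lt (lt_of_le_of_ne (enorm_nonneg w) (Ne.symm h)))

section spectral
variable {d : ℕ} {M : Matrix (Fin d) (Fin d) ℝ}

/-- Each eigenvalue of a PSD matrix is at least `sMin M`. -/
lemma sMin_le_eigenvalue (hM : M.PosSemidef) (j : Fin d) :
    sMin M ≤ hM.1.eigenvalues j := by
  have hb1 : _root_.enorm ⇑(hM.1.eigenvectorBasis j) = 1 := by
    rw [enorm_eq_norm]
    exact hM.1.eigenvectorBasis.orthonormal.1 j
  have hmv := hM.1.mulVec_eigenvectorBasis j
  have : _root_.enorm (M.mulVec ⇑(hM.1.eigenvectorBasis j)) = hM.1.eigenvalues j := by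
    rw [hmv, enorm_smul_fin, hb1, mul_one, abs_of_nonneg (hM.eigenvalues_nonneg j)]
  calc sMin M ≤ _root_.enorm (M.mulVec ⇑(hM.1.eigenvectorBasis j)) := sMin_le M hb1
    _ = hM.1.eigenvalues j := this

/-- Quadratic form lower bound via the smallest singular value, for PSD matrices. -/
lemma sMin_le_quadForm (hM : M.PosSemidef) {v : Fin d → ℝ} (hv : _root_.enorm v = 1) :
    sMin M ≤ M.mulVec v ⬝ᵥ v := by
  classical
  set b := hM.1.eigenvectorBasis with hb
  set μ := hM.1.eigenvalues with hμ
  set w : EuclideanSpace ℝ (Fin d) := (WithLp.equiv 2 (Fin d → ℝ)).symm v with hwdef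
  have hrepr : ∀ j, b.repr ((WithLp.equiv 2 (Fin d → ℝ)).symm (M.mulVec v)) j
      = μ j * b.repr w j := by
    intro j
    rw [b.repr_apply_apply, b.repr_apply_apply]
    have h1 : inner (𝕜 := ℝ) (b j) ((WithLp.equiv 2 (Fin d → ℝ)).symm (M.mulVec v))
        = ⇑(b j) ⬝ᵥ (M.mulVec v) := by
      simp [PiLp.inner_apply, dotProduct, RCLike.inner_apply, mul_comm]
    have h2 : ⇑(b j) ⬝ᵥ (M.mulVec v) = (M.mulVec ⇑(b j)) ⬝ᵥ v := by
      rw [Matrix.dotProduct_mulVec, ← Matrix.mulVec_transpose]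
      congr 1
      have : Mᵀ = M := by
        have := hM.1
        rwa [Matrix.IsHermitian, Matrix.conjTranspose_eq_transpose_of_trivial] at this
      rw [this]
    have h3 : (M.mulVec ⇑(b j)) ⬝ᵥ v = μ j * (⇑(b j) ⬝ᵥ v) := by
      rw [hM.1.mulVec_eigenvectorBasis j]
      simp [smul_dotProduct]
      rfl
    have h4 : inner (𝕜 := ℝ) (b j) w = ⇑(b j) ⬝ᵥ v := by
      simp only [PiLp.inner_apply, dotProduct, RCLike.inner_apply, starRingEnd_apply,
        star_trivial]
      exact Finset.sum_congr rfl fun x _ => mul_comm _ _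
    rw [h1, h2, h3, h4]
  have hnormrepr : Real.sqrt (∑ j, (b.repr w j) ^ 2) = ‖b.repr w‖ := by
    rw [EuclideanSpace.norm_eq]
    congr 1
    apply Finset.sum_congr rfl
    intro j _
    rw [Real.norm_eq_abs, sq_abs]
  have hsum1 : ∑ j, (b.repr w j) ^ 2 = 1 := by
    have hn : ‖b.repr w‖ = ‖w‖ := b.repr.norm_map w
    have h5 : ‖w‖ = 1 := by rw [← enorm_eq_norm]; exact hv
    have h6 : Real.sqrt (∑ j, (b.repr w j) ^ 2) = 1 := by rw [hnormrepr, hn, h5]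
    calc ∑ j, (b.repr w j) ^ 2
        = Real.sqrt (∑ j, (b.repr w j) ^ 2) ^ 2 := by
          rw [Real.sq_sqrt (Finset.sum_nonneg fun j _ => sq_nonneg _)]
      _ = 1 := by rw [h6]; norm_num
  have hdot : M.mulVec v ⬝ᵥ v = ∑ j, μ j * (b.repr w j) ^ 2 := by
    have e1 : M.mulVec v ⬝ᵥ v
        = inner (𝕜 := ℝ) ((WithLp.equiv 2 (Fin d → ℝ)).symm (M.mulVec v)) w := by
      simp only [PiLp.inner_apply, RCLike.inner_apply, starRingEnd_apply, star_trivial]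
      exact Finset.sum_congr rfl fun x _ => mul_comm _ _
    have e2 : inner (𝕜 := ℝ) ((WithLp.equiv 2 (Fin d → ℝ)).symm (M.mulVec v)) w
        = inner (𝕜 := ℝ) (b.repr ((WithLp.equiv 2 (Fin d → ℝ)).symm (M.mulVec v)))
            (b.repr w) := (b.repr.inner_map_map _ _).symm
    have e3 : inner (𝕜 := ℝ) (b.repr ((WithLp.equiv 2 (Fin d → ℝ)).symm (M.mulVec v)))
        (b.repr w) = ∑ j, b.repr ((WithLp.equiv 2 (Fin d → ℝ)).symm (M.mulVec v)) j
          * b.repr w j := by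
      simp only [PiLp.inner_apply, RCLike.inner_apply, starRingEnd_apply, star_trivial]
      exact Finset.sum_congr rfl fun x _ => mul_comm _ _
    rw [e1, e2, e3]
    apply Finset.sum_congr rfl
    intro j _
    rw [hrepr j]
    ring
  rw [hdot]
  calc sMin M = sMin M * ∑ j, (b.repr w j) ^ 2 := by rw [hsum1, mul_one]
    _ = ∑ j, sMin M * (b.repr w j) ^ 2 := Finset.mul_sum _ _ _
    _ ≤ ∑ j, μ j * (b.repr w j) ^ 2 :=
        Finset.sum_le_sum fun j _ =>
          mul_le_mul_of_nonneg_right (sMin_le_eigenvalue hM j) (sq_nonneg _)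

end spectral

lemma upper_B {d : ℕ} (M : Matrix (Fin d) (Fin d) ℝ) {v : Fin d → ℝ} (hv : _root_.enorm v = 1) :
    _root_.enorm ((M + 1).mulVec v) ≤ sMax M + 1 := by
  have h1 : (M + 1).mulVec v = M.mulVec v + v := by
    rw [Matrix.add_mulVec, Matrix.one_mulVec]
  rw [h1]
  calc _root_.enorm (M.mulVec v + v) ≤ _root_.enorm (M.mulVec v) + _root_.enorm v := enorm_add_le_fin _ _
    _ ≤ sMax M + 1 := by rw [hv]; exact add_le_add_left (le_sMax M hv) 1

lemma lower_B {d : ℕ} {M : Matrix (Fin d) (Fin d) ℝ} (hM : M.PosSemidef)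
    {v : Fin d → ℝ} (hv : _root_.enorm v = 1) :
    sMin M + 1 ≤ _root_.enorm ((M + 1).mulVec v) := by
  have h1 : (M + 1).mulVec v = M.mulVec v + v := by
    rw [Matrix.add_mulVec, Matrix.one_mulVec]
  have expand : _root_.enorm (M.mulVec v + v) ^ 2
      = _root_.enorm (M.mulVec v) ^ 2 + 2 * (M.mulVec v ⬝ᵥ v) + _root_.enorm v ^ 2 := by
    rw [enorm_sq, enorm_sq, enorm_sq]
    have hdp : M.mulVec v ⬝ᵥ v = ∑ i, M.mulVec v i * v i := rfl
    rw [hdp, Finset.mul_sum, ← Finset.sum_add_distrib, ← Finset.sum_add_distrib]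
    apply Finset.sum_congr rfl
    intro i _
    have : (M.mulVec v + v) i = M.mulVec v i + v i := rfl
    rw [this]; ring
  have hsm : 0 ≤ sMin M := sMin_nonneg M
  have hsq : (sMin M + 1) ^ 2 ≤ _root_.enorm (M.mulVec v + v) ^ 2 := by
    rw [expand, hv]
    have e1 : sMin M ≤ _root_.enorm (M.mulVec v) := by
      have := sMin_le M hv
      exact this
    have e2 : sMin M ≤ M.mulVec v ⬝ᵥ v := sMin_le_quadForm hM hv
    have e3 : sMin M ^ 2 ≤ _root_.enorm (M.mulVec v) ^ 2 := pow_le_pow_left₀ hsm e1 2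
    nlinarith
  rw [h1]
  calc sMin M + 1 = Real.sqrt ((sMin M + 1) ^ 2) := by
        rw [Real.sqrt_sq (by linarith)]
    _ ≤ Real.sqrt (_root_.enorm (M.mulVec v + v) ^ 2) := Real.sqrt_le_sqrt hsq
    _ = _root_.enorm (M.mulVec v + v) := Real.sqrt_sq (enorm_nonneg _)


/-- Proposition 2 (skip connection bound): if `X` has full column rank and `M` is
symmetric positive semi-definite, then `X M + X` has full column rank and
`κ(X M + X) ≤ κ(X) (σmax(M) + 1) / (σmin(M) + 1)`. -/
theorem skip_connection_bound {n d : ℕ}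
    (X : Matrix (Fin n) (Fin d) ℝ) (M : Matrix (Fin d) (Fin d) ℝ)
    (hX : 0 < sMin X) (hM : M.PosSemidef) :
    0 < sMin (X * M + X) ∧
      condNum (X * M + X) ≤ condNum X * ((sMax M + 1) / (sMin M + 1)) := by
  -- there is a unit vector
  have hunit : ∃ v : Fin d → ℝ, _root_.enorm v = 1 := by
    by_contra h
    push_neg at h
    have hempty : svSet X = ∅ := by
      ext c
      simp only [svSet, Set.mem_setOf_eq, Set.mem_empty_iff_false, iff_false, not_exists]
      intro v hv
      exact absurd hv.1 (h v)
    have : sMin X = 0 := by rw [sMin_eq, hempty, Real.sInf_empty]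
    rw [this] at hX
    exact lt_irrefl 0 hX
  obtain ⟨v₀, hv₀⟩ := hunit
  have hneX : (svSet X).Nonempty := ⟨_, v₀, hv₀, rfl⟩
  have hneM : (svSet M).Nonempty := ⟨_, v₀, hv₀, rfl⟩
  have hXB : X * M + X = X * (M + 1) := by rw [Matrix.mul_add, Matrix.mul_one]
  have hneB : (svSet (X * (M + 1))).Nonempty := ⟨_, v₀, hv₀, rfl⟩
  have hsMaxX : 0 ≤ sMax X := sMax_nonneg' X hneX
  have hsMaxM : 0 ≤ sMax M := sMax_nonneg' M hneM
  have hsMinM : 0 ≤ sMin M := sMin_nonneg M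
  -- pointwise bounds
  have hup : ∀ v : Fin d → ℝ, _root_.enorm v = 1 →
      _root_.enorm ((X * (M + 1)).mulVec v) ≤ sMax X * (sMax M + 1) := by
    intro v hv
    rw [← Matrix.mulVec_mulVec]
    calc _root_.enorm (X.mulVec ((M + 1).mulVec v))
        ≤ sMax X * _root_.enorm ((M + 1).mulVec v) := mulVec_le_sMax X hneX _
      _ ≤ sMax X * (sMax M + 1) :=
          mul_le_mul_of_nonneg_left (upper_B M hv) hsMaxX
  have hlo : ∀ v : Fin d → ℝ, _root_.enorm v = 1 →
      sMin X * (sMin M + 1) ≤ _root_.enorm ((X * (M + 1)).mulVec v) := by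
    intro v hv
    rw [← Matrix.mulVec_mulVec]
    calc sMin X * (sMin M + 1)
        ≤ sMin X * _root_.enorm ((M + 1).mulVec v) :=
          mul_le_mul_of_nonneg_left (lower_B hM hv) (le_of_lt hX)
      _ ≤ _root_.enorm (X.mulVec ((M + 1).mulVec v)) := sMin_le_mulVec X _
  have hMaxB : sMax (X * (M + 1)) ≤ sMax X * (sMax M + 1) := by
    rw [sMax_eq]
    apply csSup_le hneB
    rintro c ⟨v, hv, rfl⟩
    exact hup v hv
  have hMinB : sMin X * (sMin M + 1) ≤ sMin (X * (M + 1)) := by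
    rw [sMin_eq]
    apply le_csInf hneB
    rintro c ⟨v, hv, rfl⟩
    exact hlo v hv
  have hMinBpos : 0 < sMin (X * (M + 1)) :=
    lt_of_lt_of_le (mul_pos hX (by linarith)) hMinB
  constructor
  · rw [hXB]; exact hMinBpos
  · rw [hXB]
    unfold condNum
    rw [div_mul_div_comm]
    exact div_le_div₀ (mul_nonneg hsMaxX (by linarith)) hMaxB
      (mul_pos hX (by linarith)) hMinB
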